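/- Let g be the maximal transitive prolongation of an extended translation algebra m = V + W with dim V ≥ 3, and φ : g₁ → W the unique linear map with [D,v] = v·φ(D) for all D ∈ g₁, v ∈ V. Then φ is injective and so(V)-equivariant: φ([A,D]) = A·φ(D) for all A ∈ so(V) ⊂ g₀ and D ∈ g₁ (where A acts on W by the spin representation). -/

import Mathlib

universe u

/-- `(L, g, ιV, ιW)` is a transitive graded (Tanaka) prolongation of the fundamental
graded Lie algebra `m = m₋₂ + m₋₁ = V + W` with bracket `br : W × W → V`:
`g` is a ℤ-gradation of `L` by finite-dimensional subspaces, vanishing in degrees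
`< -2`, transitive in non-negative degrees, and `ιV, ιW` identify `V, W` with
`g (-2), g (-1)` compatibly with the bracket. -/
structure IsGradedProlong (K : Type*) [Field K]
    (V W : Type*) [AddCommGroup V] [Module K V] [AddCommGroup W] [Module K W]
    (L : Type*) [LieRing L] [LieAlgebra K L]
    (br : W →ₗ[K] W →ₗ[K] V)
    (g : ℤ → Submodule K L) (ιV : V →ₗ[K] L) (ιW : W →ₗ[K] L) : Prop where
  bracket_mem : ∀ i j : ℤ, ∀ x ∈ g i, ∀ y ∈ g j, ⁅x, y⁆ ∈ g (i + j)
  low_eq_bot : ∀ i : ℤ, i < -2 → g i = ⊥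
  finite_dim : ∀ i : ℤ, FiniteDimensional K (g i)
  indep : iSupIndep g
  supr_eq_top : ⨆ i, g i = ⊤
  transitive : ∀ p : ℤ, 0 ≤ p → ∀ x ∈ g p, (∀ y ∈ g (-1 : ℤ), ⁅x, y⁆ = 0) → x = 0
  range_iV : LinearMap.range ιV = g (-2 : ℤ)
  range_iW : LinearMap.range ιW = g (-1 : ℤ)
  inj_iV : Function.Injective ιV
  inj_iW : Function.Injective ιW
  bracket_iW : ∀ s t : W, ⁅ιW s, ιW t⁆ = ιV (br s t)

/-- `(L, g, ιV, ιW)` is the *maximal* transitive prolongation of `m = V + W`: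
it is a transitive graded prolongation, and every other transitive graded
prolongation of `m` embeds into it by an injective graded Lie algebra morphism
restricting to the identity on `m`. -/
def IsMaxGradedProlong (K : Type*) [Field K]
    (V W : Type*) [AddCommGroup V] [Module K V] [AddCommGroup W] [Module K W]
    (L : Type*) [LieRing L] [LieAlgebra K L]
    (br : W →ₗ[K] W →ₗ[K] V)
    (g : ℤ → Submodule K L) (ιV : V →ₗ[K] L) (ιW : W →ₗ[K] L) : Prop :=
  IsGradedProlong K V W L br g ιV ιW ∧
  ∀ (L' : Type u) [LieRing L'] [LieAlgebra K L']
    (g' : ℤ → Submodule K L') (ιV' : V →ₗ[K] L') (ιW' : W →ₗ[K] L'),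
    IsGradedProlong K V W L' br g' ιV' ιW' →
    ∃ φ : L' →ₗ⁅K⁆ L, Function.Injective φ ∧
      (∀ i : ℤ, ∀ x ∈ g' i, φ x ∈ g i) ∧
      (∀ v : V, φ (ιV' v) = ιV v) ∧ (∀ s : W, φ (ιW' s) = ιW s)

/-!
If `φ D = 0` then `D ∈ g₁` commutes with `g₋₂ = V`, hence so does every `⁅D, s⁆ ∈ g₀`
(`s ∈ W`), and `c s t := ⁅⁅D, s⁆, t⁆ ∈ W` is symmetric with each `c s` a derivation of the
bracket `W × W → V`. Transported through the admissible pairing `bW`, this says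
`c (e·r) s = -e·U(r, s)` for a single `U` and every anisotropic `e`, and symmetry of `c` then
gives `e·U(w, f·r) = f·U(w, e·r)`. For three orthogonal anisotropic vectors, which exist as
`dim V ≥ 3`, this relation and the Clifford anticommutation force `U = 0`; so `c = 0`, and
transitivity kills first `⁅D, s⁆` and then `D`.

Equivariance is the Jacobi identity for `⁅⁅a, D⁆, e⁆` combined with the Clifford identity
`[spin (v ∧ u), e·] = (rot (v ∧ u) e)·`, read off after multiplying by one anisotropic `e`.
-/

open Module LinearMap

theorem exists_orthogonal_anisotropic_triple {K V : Type*} [Field K] [NeZero (2 : K)]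
    [AddCommGroup V] [Module K V] [FiniteDimensional K V] (hdim : 3 ≤ finrank K V)
    {B : V →ₗ[K] V →ₗ[K] K} (hBsymm : ∀ v u : V, B v u = B u v) (hBnd : B.SeparatingLeft) :
    ∃ x y z : V, B x x ≠ 0 ∧ B y y ≠ 0 ∧ B z z ≠ 0 ∧ B x y = 0 ∧ B x z = 0 ∧ B y z = 0 := by
  have := invertibleOfNonzero (two_ne_zero : (2 : K) ≠ 0)
  obtain ⟨b, hb⟩ := BilinForm.exists_orthogonal_basis ⟨hBsymm⟩
  have hinj := Fin.castLE_injective hdim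
  let e : Fin 3 → V := b ∘ Fin.castLE hdim
  have hanis (i : Fin 3) : B (e i) (e i) ≠ 0 := hb.not_isOrtho_basis_self_of_separatingLeft hBnd _
  have horth (i j : Fin 3) (hij : i ≠ j) : B (e i) (e j) = 0 := hb (hinj.ne hij)
  exact ⟨e 0, e 1, e 2, hanis 0, hanis 1, hanis 2, horth 0 1 (by decide), horth 0 2 (by decide),
    horth 1 2 (by decide)⟩

section Clifford

variable {K V W : Type*} [Field K] [AddCommGroup V] [Module K V] [AddCommGroup W] [Module K W]
  {B : V →ₗ[K] V →ₗ[K] K} {cl : V →ₗ[K] W →ₗ[K] W}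

theorem cl_cl_add_cl_cl (hBsymm : ∀ v u : V, B v u = B u v)
    (hcl : ∀ (v : V) (s : W), cl v (cl v s) = -(B v v) • s) (a b : V) (w : W) :
    cl a (cl b w) + cl b (cl a w) = -((2 * B a b) • w) := by
  have h := hcl (a + b) w
  simp only [map_add, LinearMap.add_apply] at h
  rw [hcl a w, hcl b w, hBsymm b a] at h
  linear_combination (norm := module) h

theorem cl_cl_of_orthogonal (hBsymm : ∀ v u : V, B v u = B u v)
    (hcl : ∀ (v : V) (s : W), cl v (cl v s) = -(B v v) • s) {a b : V} (hab : B a b = 0) (w : W) :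
    cl a (cl b w) = -cl b (cl a w) := by
  have h := cl_cl_add_cl_cl hBsymm hcl a b w
  rw [hab, mul_zero, zero_smul, neg_zero] at h
  exact eq_neg_of_add_eq_zero_left h

theorem cl_injective (hcl : ∀ (v : V) (s : W), cl v (cl v s) = -(B v v) • s) {e : V}
    (he : B e e ≠ 0) : Function.Injective (cl e) := by
  refine (injective_iff_map_eq_zero _).2 fun w hw => ?_
  have h := hcl e w
  rw [hw, map_zero, eq_comm, neg_smul, neg_eq_zero] at h
  exact (smul_eq_zero.mp h).resolve_left he

theorem cl_surjective (hcl : ∀ (v : V) (s : W), cl v (cl v s) = -(B v v) • s) {e : V}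
    (he : B e e ≠ 0) : Function.Surjective (cl e) := fun s =>
  ⟨(-(B e e)⁻¹) • cl e s, by
    rw [map_smul, hcl, smul_smul, neg_mul_neg, inv_mul_cancel₀ he, one_smul]⟩

theorem spin_cl_sub_cl_spin (hBsymm : ∀ v u : V, B v u = B u v)
    (hcl : ∀ (v : V) (s : W), cl v (cl v s) = -(B v v) • s) (v u e : V) (w : W) :
    (cl v (cl u (cl e w)) - cl u (cl v (cl e w))) - cl e (cl v (cl u w) - cl u (cl v w)) =
      cl ((4 * B v e) • u - (4 * B u e) • v) w := by
  have h1 := congrArg (cl v) (cl_cl_add_cl_cl hBsymm hcl u e w)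
  have h2 := cl_cl_add_cl_cl hBsymm hcl v e (cl u w)
  have h3 := congrArg (cl u) (cl_cl_add_cl_cl hBsymm hcl v e w)
  have h4 := cl_cl_add_cl_cl hBsymm hcl u e (cl v w)
  simp only [map_add, map_neg, map_smul, map_sub, LinearMap.sub_apply, LinearMap.smul_apply]
    at h1 h3 ⊢
  linear_combination (norm := module) h1 - h2 - h3 + h4

theorem eq_zero_of_cl_comp_comm [NeZero (2 : K)] (hBsymm : ∀ v u : V, B v u = B u v)
    (hcl : ∀ (v : V) (s : W), cl v (cl v s) = -(B v v) • s) {x y z : V}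
    (hx : B x x ≠ 0) (hy : B y y ≠ 0) (hz : B z z ≠ 0)
    (hxy : B x y = 0) (hxz : B x z = 0) (hyz : B y z = 0) (F : W → W)
    (hF : ∀ a b : V, B a a ≠ 0 → B b b ≠ 0 → ∀ r, cl a (F (cl b r)) = cl b (F (cl a r))) :
    F = 0 := by
  have hanti {a b : V} (hab : B a b = 0) := cl_cl_of_orthogonal hBsymm hcl hab
  suffices h : ∀ r, F (cl x r) = 0 by
    funext s
    obtain ⟨r, rfl⟩ := cl_surjective hcl hx s
    exact h r
  intro r
  -- moving `cl x` across `cl y` and `cl z` in two different orders costs opposite signs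
  have hneg : cl y (cl z (F (cl x r))) = -cl y (cl z (F (cl x r))) := calc
    cl y (cl z (F (cl x r))) = cl y (cl x (F (cl z r))) := by rw [hF z x hz hx]
    _ = -cl x (cl y (F (cl z r))) := by rw [hanti ((hBsymm y x).trans hxy)]
    _ = -cl x (cl z (F (cl y r))) := by rw [hF y z hy hz]
    _ = cl z (cl x (F (cl y r))) := by rw [hanti hxz, neg_neg]
    _ = cl z (cl y (F (cl x r))) := by rw [hF x y hx hy]
    _ = -cl y (cl z (F (cl x r))) := by rw [hanti ((hBsymm z y).trans hyz)]
  have h0 : cl y (cl z (F (cl x r))) = 0 := by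
    rwa [eq_neg_iff_add_eq_zero, ← two_smul K, smul_eq_zero, or_iff_right two_ne_zero] at hneg
  simpa only [map_eq_zero_iff _ (cl_injective hcl hy), map_eq_zero_iff _ (cl_injective hcl hz)]
    using h0

end Clifford

section AdmissiblePairing

variable {K V W : Type*} [Field K] [AddCommGroup V] [Module K V] [AddCommGroup W] [Module K W]
  {B : V →ₗ[K] V →ₗ[K] K} {cl : V →ₗ[K] W →ₗ[K] W} {bW : W →ₗ[K] W →ₗ[K] K} {ε : K}

theorem bW_cl_eq_of_br_add_br_eq_zero {br : W →ₗ[K] W →ₗ[K] V} (hε : ε ≠ 0)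
    (hbWrefl : ∀ s t : W, bW s t = -(ε * bW t s))
    (hbWcl : ∀ (v : V) (s t : W), bW (cl v s) t = ε * bW s (cl v t))
    (hbr : ∀ (s t : W) (v : V), B (br s t) v = bW (cl v s) t)
    {p q r t : W} (h : br p r + br t q = 0) (e : V) :
    bW p (cl e r) = bW q (cl e t) := by
  have h' := congrArg (B · e) h
  simp only [map_add, LinearMap.add_apply, map_zero, LinearMap.zero_apply] at h'
  rw [hbr, hbr, hbWcl e p r, hbWrefl (cl e t) q] at h'
  exact mul_left_cancel₀ hε (by linear_combination h')

theorem bW_cl_c_cl (hε : ε ≠ 0) (hcl : ∀ (v : V) (s : W), cl v (cl v s) = -(B v v) • s)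
    (hbWrefl : ∀ s t : W, bW s t = -(ε * bW t s))
    (hbWcl : ∀ (v : V) (s t : W), bW (cl v s) t = ε * bW s (cl v t))
    {c : W → W → W} (hsymm : ∀ s t, c s t = c t s)
    (hcomm : ∀ (e : V) (s t r : W), bW (c s t) (cl e r) = bW (c s r) (cl e t))
    (e : V) (r s t : W) :
    bW t (cl e (c (cl e r) s)) = B e e * bW (c s t) r := by
  have hperm : bW (c (cl e r) s) (cl e t) = bW (c t s) (cl e (cl e r)) := by
    rw [hsymm, hcomm, hsymm s t]
  apply mul_left_cancel₀ hε
  rw [← hbWcl, hbWrefl, hperm, hcl, map_smul, smul_eq_mul, hsymm t s]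
  ring

theorem exists_c_cl_eq_neg_cl (hcl : ∀ (v : V) (s : W), cl v (cl v s) = -(B v v) • s)
    (hbW : bW.SeparatingRight) {c : W → W → W} {x : V} (hx : B x x ≠ 0)
    (hadj : ∀ (e : V) (r s t : W), bW t (cl e (c (cl e r) s)) = B e e * bW (c s t) r) :
    ∃ U : W → W → W, ∀ e : V, B e e ≠ 0 → ∀ r s, c (cl e r) s = -cl e (U r s) := by
  refine ⟨fun r s => (B x x)⁻¹ • cl x (c (cl x r) s), fun e he r s => ?_⟩
  -- both sides pair with every `t` to `B e e * bW (c s t) r`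
  have hU : cl e (c (cl e r) s) = B e e • (B x x)⁻¹ • cl x (c (cl x r) s) := by
    refine sub_eq_zero.mp (hbW _ fun t => ?_)
    rw [map_sub, map_smul, map_smul, hadj, hadj, smul_eq_mul, smul_eq_mul]
    field_simp
    ring
  apply cl_injective hcl he
  rw [hU, map_neg, hcl, neg_smul, neg_neg]

theorem eq_zero_of_symm_of_bW_cl_comm [NeZero (2 : K)] [FiniteDimensional K V]
    (hdim : 3 ≤ finrank K V) (hBsymm : ∀ v u : V, B v u = B u v) (hBnd : B.SeparatingLeft)
    (hcl : ∀ (v : V) (s : W), cl v (cl v s) = -(B v v) • s) (hε : ε ≠ 0)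
    (hbWnd : bW.SeparatingLeft) (hbWrefl : ∀ s t : W, bW s t = -(ε * bW t s))
    (hbWcl : ∀ (v : V) (s t : W), bW (cl v s) t = ε * bW s (cl v t))
    {c : W → W → W} (hsymm : ∀ s t, c s t = c t s)
    (hcomm : ∀ (e : V) (s t r : W), bW (c s t) (cl e r) = bW (c s r) (cl e t)) :
    c = 0 := by
  obtain ⟨x, y, z, hx, hy, hz, hxy, hxz, hyz⟩ :=
    exists_orthogonal_anisotropic_triple hdim hBsymm hBnd
  have hrefl : bW.IsRefl := fun s t h => by rw [hbWrefl, h, mul_zero, neg_zero]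
  obtain ⟨U, hU⟩ := exists_c_cl_eq_neg_cl hcl (hrefl.nondegenerate_iff_separatingLeft.mpr hbWnd).2
    hx (bW_cl_c_cl hε hcl hbWrefl hbWcl hsymm hcomm)
  have hswap (a b : V) (ha : B a a ≠ 0) (hb : B b b ≠ 0) (r w : W) :
      cl a (U r (cl b w)) = cl b (U w (cl a r)) := by
    simpa [hU a ha, hU b hb] using hsymm (cl a r) (cl b w)
  have hU_cl (b : V) (hb : B b b ≠ 0) (r w : W) : U r (cl b w) = U w (cl b r) :=
    cl_injective hcl hb (hswap b b hb hb r w)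
  have hU0 (w : W) : U w = 0 :=
    eq_zero_of_cl_comp_comm hBsymm hcl hx hy hz hxy hxz hyz (U w) fun a b ha hb r => by
      rw [← hU_cl b hb]
      exact hswap a b ha hb r w
  funext s t
  obtain ⟨r, rfl⟩ := cl_surjective hcl hx s
  rw [hU x hx, hU0, Pi.zero_apply, map_zero, neg_zero, Pi.zero_apply, Pi.zero_apply]

end AdmissiblePairing

namespace IsGradedProlong

variable {K V W L : Type*} [Field K] [AddCommGroup V] [Module K V] [AddCommGroup W] [Module K W]
  [LieRing L] [LieAlgebra K L] {br : W →ₗ[K] W →ₗ[K] V} {g : ℤ → Submodule K L}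
  {ιV : V →ₗ[K] L} {ιW : W →ₗ[K] L}

theorem ιV_mem (hp : IsGradedProlong K V W L br g ιV ιW) (v : V) : ιV v ∈ g (-2) :=
  hp.range_iV ▸ LinearMap.mem_range_self ιV v

theorem ιW_mem (hp : IsGradedProlong K V W L br g ιV ιW) (s : W) : ιW s ∈ g (-1) :=
  hp.range_iW ▸ LinearMap.mem_range_self ιW s

theorem lie_ιW_ιV (hp : IsGradedProlong K V W L br g ιV ιW) (s : W) (v : V) :
    ⁅ιW s, ιV v⁆ = 0 := by
  have h := hp.bracket_mem _ _ _ (hp.ιW_mem s) _ (hp.ιV_mem v)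
  rwa [hp.low_eq_bot _ (by norm_num), Submodule.mem_bot] at h

theorem eq_zero_of_lie_ιW_eq_zero (hp : IsGradedProlong K V W L br g ιV ιW) {p : ℤ} (hp0 : 0 ≤ p)
    {x : L} (hx : x ∈ g p) (h : ∀ s, ⁅x, ιW s⁆ = 0) : x = 0 :=
  hp.transitive p hp0 x hx fun y hy => by
    obtain ⟨s, rfl⟩ := LinearMap.mem_range.mp (hp.range_iW ▸ hy)
    exact h s

theorem lie_ιW_mem_zero (hp : IsGradedProlong K V W L br g ιV ιW) {D : L} (hD : D ∈ g 1)
    (s : W) : ⁅D, ιW s⁆ ∈ g 0 :=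
  hp.bracket_mem 1 (-1) D hD _ (hp.ιW_mem s)

theorem lie_lie_ιW_mem_range (hp : IsGradedProlong K V W L br g ιV ιW) {D : L} (hD : D ∈ g 1)
    (s t : W) : ⁅⁅D, ιW s⁆, ιW t⁆ ∈ LinearMap.range ιW :=
  hp.range_iW ▸ hp.bracket_mem 0 (-1) _ (hp.lie_ιW_mem_zero hD s) _ (hp.ιW_mem t)

theorem eq_zero_of_lie_ιV_eq_zero [NeZero (2 : K)] [FiniteDimensional K V]
    (hp : IsGradedProlong K V W L br g ιV ιW) (hdim : 3 ≤ finrank K V)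
    {B : V →ₗ[K] V →ₗ[K] K} (hBsymm : ∀ v u : V, B v u = B u v) (hBnd : B.SeparatingLeft)
    {cl : V →ₗ[K] W →ₗ[K] W} (hcl : ∀ (v : V) (s : W), cl v (cl v s) = -(B v v) • s)
    {bW : W →ₗ[K] W →ₗ[K] K} {ε : K} (hε : ε ≠ 0) (hbWnd : bW.SeparatingLeft)
    (hbWrefl : ∀ s t : W, bW s t = -(ε * bW t s))
    (hbWcl : ∀ (v : V) (s t : W), bW (cl v s) t = ε * bW s (cl v t))
    (hbr : ∀ (s t : W) (v : V), B (br s t) v = bW (cl v s) t)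
    {D : L} (hD : D ∈ g 1) (hDV : ∀ v, ⁅D, ιV v⁆ = 0) : D = 0 := by
  choose c hc using fun s t => LinearMap.mem_range.mp (hp.lie_lie_ιW_mem_range hD s t)
  have hsymm (s t : W) : c s t = c t s := hp.inj_iW <| calc
    ιW (c s t) = ⁅D, ⁅ιW s, ιW t⁆⁆ - ⁅ιW s, ⁅D, ιW t⁆⁆ := by rw [hc, lie_lie]
    _ = ⁅⁅D, ιW t⁆, ιW s⁆ := by rw [hp.bracket_iW, hDV, zero_sub, lie_skew]
    _ = ιW (c t s) := (hc t s).symm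
  -- each `c s` is a derivation of `br`, since `⁅D, ιW s⁆` commutes with `g₋₂`
  have hder (s t r : W) : br (c s t) r + br t (c s r) = 0 := hp.inj_iV <| by
    rw [map_add, ← hp.bracket_iW, ← hp.bracket_iW, hc, hc, ← leibniz_lie, hp.bracket_iW,
      lie_lie, hp.lie_ιW_ιV, lie_zero, hDV, lie_zero, sub_zero, map_zero]
  have hc0 : c = 0 := eq_zero_of_symm_of_bW_cl_comm hdim hBsymm hBnd hcl hε hbWnd hbWrefl hbWcl
    hsymm fun e s t r => bW_cl_eq_of_br_add_br_eq_zero hε hbWrefl hbWcl hbr (hder s t r) e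
  refine hp.eq_zero_of_lie_ιW_eq_zero zero_le_one hD fun s =>
    hp.eq_zero_of_lie_ιW_eq_zero le_rfl (hp.lie_ιW_mem_zero hD s) fun t => ?_
  rw [← hc, hc0, Pi.zero_apply, Pi.zero_apply, map_zero]

end IsGradedProlong

/-- the canonical map `φ : g₁ → W` (defined by `⁅D, v⁆ = v·φ(D)`)
is injective and `so(V)`-equivariant: for any `a ∈ g₀` acting on `V` as the
element `vu - uv ∈ so(V)` and on `W` by the spin representation,
`φ(⁅a, D⁆) = (vu - uv)·φ(D)`. -/
theorem phi_injective_equivariant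
    {K : Type*} [Field K] [CharZero K]
    {V : Type*} [AddCommGroup V] [Module K V] [FiniteDimensional K V]
    {W : Type*} [AddCommGroup W] [Module K W]
    {L : Type*} [LieRing L] [LieAlgebra K L]
    (hdim : 3 ≤ Module.finrank K V)
    (B : V →ₗ[K] V →ₗ[K] K)
    (hBsymm : ∀ v u : V, B v u = B u v)
    (hBnd : ∀ v : V, (∀ u : V, B v u = 0) → v = 0)
    (cl : V →ₗ[K] W →ₗ[K] W)
    (hcl : ∀ (v : V) (s : W), cl v (cl v s) = -(B v v) • s)
    (bW : W →ₗ[K] W →ₗ[K] K)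
    (hbWnd : ∀ s : W, (∀ t : W, bW s t = 0) → s = 0)
    (ε : K) (hε : ε = 1 ∨ ε = -1)
    (hbWrefl : ∀ s t : W, bW s t = -(ε * bW t s))
    (hbWcl : ∀ (v : V) (s t : W), bW (cl v s) t = ε * bW s (cl v t))
    (br : W →ₗ[K] W →ₗ[K] V)
    (hbr : ∀ (s t : W) (v : V), B (br s t) v = bW (cl v s) t)
    (g : ℤ → Submodule K L) (ιV : V →ₗ[K] L) (ιW : W →ₗ[K] L)
    (hmax : IsMaxGradedProlong K V W L br g ιV ιW)
    (φ : g (1 : ℤ) →ₗ[K] W)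
    (hφ : ∀ (D : g (1 : ℤ)) (v : V), ⁅(D : L), ιV v⁆ = ιW (cl v (φ D))) :
    Function.Injective φ ∧
    ∀ (v u : V) (a : L), a ∈ g (0 : ℤ) →
      (∀ x : V, ⁅a, ιV x⁆ = ιV ((4 * B v x) • u - (4 * B u x) • v)) →
      (∀ s : W, ⁅a, ιW s⁆ = ιW (cl v (cl u s) - cl u (cl v s))) →
      ∀ (D : g (1 : ℤ)) (hmem : ⁅a, (D : L)⁆ ∈ g (1 : ℤ)),
        φ ⟨⁅a, (D : L)⁆, hmem⟩ = cl v (cl u (φ D)) - cl u (cl v (φ D)) := by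
  obtain ⟨hp, -⟩ := hmax
  have hε0 : ε ≠ 0 := by rcases hε with rfl | rfl <;> norm_num
  refine ⟨(injective_iff_map_eq_zero φ).2 fun D hD => Subtype.ext ?_, ?_⟩
  · refine hp.eq_zero_of_lie_ιV_eq_zero hdim hBsymm hBnd hcl hε0 hbWnd hbWrefl hbWcl hbr D.2
      fun v => ?_
    rw [hφ, hD, map_zero, map_zero]
  · intro v u a _ haV haW D hmem
    obtain ⟨x, -, -, hx, -⟩ := exists_orthogonal_anisotropic_triple hdim hBsymm hBnd
    refine cl_injective hcl hx (hp.inj_iW ?_)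
    rw [← hφ ⟨_, hmem⟩, lie_lie, hφ, haV, haW, hφ, ← map_sub, ← spin_cl_sub_cl_spin hBsymm hcl,
      sub_sub_cancel]
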